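/- Let n ≥ 4, let k be a field, let ≺ be a term order on ℕ^d, and let S = ⟨a_1,…,a_n⟩ ⊆ ℕ^d be a ≺-almost symmetric affine semigroup (in particular PF(S) ≠ ∅ and F(S)_≺ exists). Then the toric ideal I_S ⊆ k[x_1,…,x_n] is not generic. -/

import Mathlib

open Finset BigOperators

/-! Basic notions for affine semigroups in `ℕ^d`, following
"Affine semigroups of maximal projective dimension". -/

def natToQ {d : ℕ} (x : Fin d → ℕ) : Fin d → ℚ := fun i => (x i : ℚ)

def natToZ {d : ℕ} (x : Fin d → ℕ) : Fin d → ℤ := fun i => (x i : ℤ)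

/-- The rational cone spanned by an affine semigroup `S ⊆ ℕ^d`: the set of
nonnegative rational combinations of elements of `S` (equivalently, of any
generating set of `S`). -/
def cone {d : ℕ} (S : AddSubmonoid (Fin d → ℕ)) : Set (Fin d → ℚ) :=
  { q | ∃ (m : ℕ) (lam : Fin m → ℚ) (s : Fin m → Fin d → ℕ),
      (∀ i, 0 ≤ lam i) ∧ (∀ i, s i ∈ S) ∧ q = ∑ i, lam i • natToQ (s i) }

/-- `H(S) = (cone(S) \ S) ∩ ℕ^d`. -/
def HSet {d : ℕ} (S : AddSubmonoid (Fin d → ℕ)) : Set (Fin d → ℕ) :=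
  { x | natToQ x ∈ cone S ∧ x ∉ S }

/-- The set of pseudo-Frobenius elements of `S`. -/
def PF {d : ℕ} (S : AddSubmonoid (Fin d → ℕ)) : Set (Fin d → ℕ) :=
  { f | f ∈ HSet S ∧ ∀ s ∈ S, s ≠ 0 → f + s ∈ S }

/-- `A` is a minimal generating set of `S`. -/
def IsMinGenSet {d : ℕ} (A : Set (Fin d → ℕ)) (S : AddSubmonoid (Fin d → ℕ)) : Prop :=
  AddSubmonoid.closure A = S ∧ ∀ x ∈ A, x ∉ AddSubmonoid.closure (A \ {x})

/-- The family `a : Fin n → ℕ^d` is a minimal generating family (the minimal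
generating set) of `S`. -/
def MinGen {n d : ℕ} (a : Fin n → Fin d → ℕ) (S : AddSubmonoid (Fin d → ℕ)) : Prop :=
  Function.Injective a ∧ IsMinGenSet (Set.range a) S

/-- `G(S)`: the subgroup of `ℤ^d` generated by `S`. -/
def grpOf {d : ℕ} (S : AddSubmonoid (Fin d → ℕ)) : AddSubgroup (Fin d → ℤ) :=
  AddSubgroup.closure (natToZ '' (S : Set (Fin d → ℕ)))

/-- `S = S₁ +_c S₂` is a gluing of the affine semigroups `S₁` and `S₂`. -/
structure IsGluing {d : ℕ} (S S₁ S₂ : AddSubmonoid (Fin d → ℕ)) (c : Fin d → ℕ) : Prop where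
  exists_partition : ∃ A₁ A₂ : Set (Fin d → ℕ),
    A₁.Finite ∧ A₂.Finite ∧ A₁.Nonempty ∧ A₂.Nonempty ∧ Disjoint A₁ A₂ ∧
    IsMinGenSet (A₁ ∪ A₂) S ∧ S₁ = AddSubmonoid.closure A₁ ∧ S₂ = AddSubmonoid.closure A₂
  mem₁ : c ∈ S₁
  mem₂ : c ∈ S₂
  grp : grpOf S₁ ⊓ grpOf S₂ = AddSubgroup.zmultiples (natToZ c)

/-- A term order on `ℕ^d`: a total order compatible with addition for which `0`
is the least element. -/
structure TermOrder (d : ℕ) : Type where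
  lt : (Fin d → ℕ) → (Fin d → ℕ) → Prop
  irrefl : ∀ x, ¬ lt x x
  trans : ∀ {x y z}, lt x y → lt y z → lt x z
  total : ∀ x y, x = y ∨ lt x y ∨ lt y x
  zero_lt : ∀ x, x ≠ 0 → lt 0 x
  add_compat : ∀ {x y : Fin d → ℕ} (z : Fin d → ℕ), lt x y → lt (x + z) (y + z)

/-- `F` is the Frobenius element `F(S)_≺ = max_≺ H(S)`. -/
def IsFrob {d : ℕ} (τ : TermOrder d) (S : AddSubmonoid (Fin d → ℕ)) (F : Fin d → ℕ) : Prop :=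
  F ∈ HSet S ∧ ∀ x ∈ HSet S, x ≠ F → τ.lt x F

/-- `S` is `≺`-almost symmetric. -/
def AlmostSym {d : ℕ} (τ : TermOrder d) (S : AddSubmonoid (Fin d → ℕ)) : Prop :=
  ∃ F, IsFrob τ S F ∧ ((PF S) \ {F}).Nonempty ∧
    ∀ g ∈ (PF S) \ {F}, ∃ h ∈ (PF S) \ {F}, g + h = F

/-- A row-factorization matrix of `f` relative to the generators `a`. -/
def IsRFMatrix {n d : ℕ} (a : Fin n → Fin d → ℕ) (f : Fin d → ℕ)
    (M : Matrix (Fin n) (Fin n) ℤ) : Prop :=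
  (∀ i, M i i = -1) ∧ (∀ i j, i ≠ j → 0 ≤ M i j) ∧
  (∀ i, ∑ j, M i j • natToZ (a j) = natToZ f)

/-- The monomial `x^u` in `k[x_1,…,x_n]`. -/
noncomputable def mono (k : Type*) [CommRing k] {n : ℕ} (u : Fin n → ℕ) :
    MvPolynomial (Fin n) k :=
  MvPolynomial.monomial (Finsupp.equivFunOnFinite.symm u) 1

/-- The binomial `x^u - x^v`. -/
noncomputable def binom (k : Type*) [CommRing k] {n : ℕ} (u v : Fin n → ℕ) :
    MvPolynomial (Fin n) k :=
  mono k u - mono k v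

/-- The semigroup map `π : k[x_1,…,x_n] → k[t_1,…,t_d]`, `x_i ↦ t^{a_i}`. -/
noncomputable def toricMap (k : Type*) [CommRing k] {n d : ℕ} (a : Fin n → Fin d → ℕ) :
    MvPolynomial (Fin n) k →ₐ[k] MvPolynomial (Fin d) k :=
  MvPolynomial.aeval (fun i => mono k (a i))

/-- The toric ideal `I_S = ker π`. -/
noncomputable def toricIdeal (k : Type*) [CommRing k] {n d : ℕ} (a : Fin n → Fin d → ℕ) :
    Ideal (MvPolynomial (Fin n) k) :=
  RingHom.ker (toricMap k a).toRingHom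

/-- Positive part of an integer vector. -/
def pospart {n : ℕ} (v : Fin n → ℤ) : Fin n → ℕ := fun i => (v i).toNat

/-- Negative part of an integer vector. -/
def negpart {n : ℕ} (v : Fin n → ℤ) : Fin n → ℕ := fun i => (-(v i)).toNat

/-- `p` is an RF-relation: a binomial obtained from the difference of two rows of
some RF-matrix of some pseudo-Frobenius element. -/
def IsRFRelation (k : Type*) [CommRing k] {n d : ℕ} (a : Fin n → Fin d → ℕ)
    (S : AddSubmonoid (Fin d → ℕ)) (p : MvPolynomial (Fin n) k) : Prop :=
  ∃ f ∈ PF S, ∃ M : Matrix (Fin n) (Fin n) ℤ, IsRFMatrix a f M ∧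
    ∃ i j : Fin n, i < j ∧
      p = binom k (pospart fun l => M i l - M j l) (negpart fun l => M i l - M j l)

/-- The toric ideal `I_S` is generic: it is minimally generated by binomials of
full support. -/
def IsGeneric (k : Type*) [CommRing k] {n d : ℕ} (a : Fin n → Fin d → ℕ) : Prop :=
  ∃ G : Finset (MvPolynomial (Fin n) k),
    (∀ g ∈ G, ∃ u v : Fin n → ℕ, g = binom k u v ∧ ∀ l, u l ≠ 0 ∨ v l ≠ 0) ∧
    Ideal.span (G : Set (MvPolynomial (Fin n) k)) = toricIdeal k a ∧
    ∀ G' : Finset (MvPolynomial (Fin n) k), G' ⊂ G →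
      Ideal.span (G' : Set (MvPolynomial (Fin n) k)) ≠ toricIdeal k a

/-- The Apéry set `Ap(S, x) = { y ∈ S : y - x ∈ H(S) }`. -/
def Ap {d : ℕ} (S : AddSubmonoid (Fin d → ℕ)) (x : Fin d → ℕ) : Set (Fin d → ℕ) :=
  { y | y ∈ S ∧ ∃ z ∈ HSet S, y = x + z }

/-- `UF(S)`: elements with a unique factorization in terms of the generators `a`. -/
def UF {n d : ℕ} (a : Fin n → Fin d → ℕ) : Set (Fin d → ℕ) :=
  { x | ∃! u : Fin n → ℕ, x = ∑ l, u l • a l }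

open Classical in
/-- The multivariate Hilbert series `Σ_{a ∈ S} t^a` of `S`. -/
noncomputable def hilbSeries {d : ℕ} (S : AddSubmonoid (Fin d → ℕ)) :
    MvPowerSeries (Fin d) ℤ :=
  fun e => if Finsupp.equivFunOnFinite e ∈ S then 1 else 0

namespace AuxNG
variable {n d : ℕ} (a : Fin n → Fin d → ℕ)

lemma symm_apply {m : ℕ} (u : Fin m → ℕ) (x : Fin m) :
    (Finsupp.equivFunOnFinite.symm u) x = u x := rfl

lemma coe_symm {m : ℕ} (u : Fin m → ℕ) : ⇑(Finsupp.equivFunOnFinite.symm u) = u := rfl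

lemma symm_add {m : ℕ} (u v : Fin m → ℕ) :
    Finsupp.equivFunOnFinite.symm (u + v)
      = Finsupp.equivFunOnFinite.symm u + Finsupp.equivFunOnFinite.symm v := by
  ext x; simp [symm_apply]

lemma symm_inj {m : ℕ} {u v : Fin m → ℕ}
    (h : Finsupp.equivFunOnFinite.symm u = Finsupp.equivFunOnFinite.symm v) : u = v :=
  Finsupp.equivFunOnFinite.symm.injective h

/-- degree map -/
def Dg (w : Fin n → ℕ) : Fin d → ℕ := ∑ l, w l • a l

lemma Dg_add (w w' : Fin n → ℕ) : Dg a (w + w') = Dg a w + Dg a w' := by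
  unfold Dg
  rw [← Finset.sum_add_distrib]
  refine Finset.sum_congr rfl fun l _ => ?_
  simp [add_smul, Pi.add_apply]

lemma Dg_zero : Dg a (0 : Fin n → ℕ) = 0 := by simp [Dg]

lemma Dg_single (i : Fin n) : Dg a (fun l => if l = i then 1 else 0) = a i := by
  unfold Dg
  rw [Finset.sum_eq_single i]
  · simp
  · intro b _ hb; simp [hb]
  · simp

lemma mono_mul (k : Type*) [CommRing k] (u v : Fin n → ℕ) :
    mono k u * mono k v = mono k (u + v) := by
  unfold mono
  rw [MvPolynomial.monomial_mul, symm_add, one_mul]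

lemma mono_zero_eq_one (k : Type*) [CommRing k] : mono k (0 : Fin n → ℕ) = 1 := by
  unfold mono
  have h0 : Finsupp.equivFunOnFinite.symm (0 : Fin n → ℕ) = 0 := by ext x; simp [symm_apply]
  rw [h0, MvPolynomial.monomial_zero', MvPolynomial.C_1]

lemma toricMap_mono (k : Type*) [CommRing k] (u : Fin n → ℕ) :
    toricMap k a (mono k u) = mono k (Dg a u) := by
  have key : ∀ s : Fin n →₀ ℕ,
      toricMap k a (MvPolynomial.monomial s 1) = mono k (Dg a ⇑s) := by
    intro s
    induction s using Finsupp.induction with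
    | zero =>
      have : (⇑(0 : Fin n →₀ ℕ)) = (0 : Fin n → ℕ) := rfl
      rw [this, Dg_zero, mono_zero_eq_one, MvPolynomial.monomial_zero', MvPolynomial.C_1,
        map_one]
    | single_add i b f hif hb ih =>
      have hsplit : (MvPolynomial.monomial (Finsupp.single i b + f) (1 : k)) =
          MvPolynomial.monomial (Finsupp.single i b) 1 * MvPolynomial.monomial f 1 := by
        rw [MvPolynomial.monomial_mul, one_mul]
      rw [hsplit, map_mul, ih]
      have h1 : toricMap k a (MvPolynomial.monomial (Finsupp.single i b) (1 : k))
          = mono k (b • a i) := by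
        rw [toricMap, MvPolynomial.aeval_monomial]
        rw [Finsupp.prod_single_index (by exact pow_zero _)]
        unfold mono
        rw [MvPolynomial.monomial_pow, one_pow, map_one, one_mul]
        have hs : b • Finsupp.equivFunOnFinite.symm (a i) = Finsupp.equivFunOnFinite.symm (b • a i) := by
          ext x
          rw [Finsupp.smul_apply, symm_apply, symm_apply, Pi.smul_apply]
        rw [hs]
      rw [h1, mono_mul]
      congr 1
      rw [Finsupp.coe_add, Dg_add]
      congr 1
      unfold Dg
      rw [Finset.sum_eq_single i]
      · simp [Finsupp.single_apply]
      · intro l _ hl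
        simp [Finsupp.single_apply, Ne.symm hl]
      · simp
  have := key (Finsupp.equivFunOnFinite.symm u)
  rwa [coe_symm] at this



section Phi
variable {k : Type*} [Field k]

lemma binom_mem {n d : ℕ} (a : Fin n → Fin d → ℕ) {u v : Fin n → ℕ}
    (huv : Dg a u = Dg a v) : binom k u v ∈ toricIdeal k a := by
  have : (toricMap k a) (binom k u v) = 0 := by
    rw [binom, map_sub, toricMap_mono, toricMap_mono, huv, sub_self]
  simpa [toricIdeal, RingHom.mem_ker] using this

lemma mem_binom {n d : ℕ} (a : Fin n → Fin d → ℕ) {u v : Fin n → ℕ}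
    (h : binom k u v ∈ toricIdeal k a) : Dg a u = Dg a v ∨ u = v := by
  by_cases huv : u = v
  · exact Or.inr huv
  left
  have h0 : (toricMap k a) (binom k u v) = 0 := by
    simpa [toricIdeal, RingHom.mem_ker] using h
  rw [binom, map_sub, toricMap_mono, toricMap_mono, sub_eq_zero] at h0
  have := (MvPolynomial.monomial_eq_monomial_iff _ _ _ _).mp h0
  rcases this with ⟨hs, _⟩ | ⟨h1, _⟩
  · exact symm_inj hs
  · exact absurd h1 one_ne_zero

variable {n : ℕ} (ε : (Fin n → ℕ) → k)

noncomputable def Phi : MvPolynomial (Fin n) k →+ k :=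
  (Finsupp.liftAddHom (fun m : Fin n →₀ ℕ => AddMonoidHom.mulRight (ε ⇑m))).comp
    AddMonoidAlgebra.coeffAddEquiv.toAddMonoidHom

lemma Phi_monomial (m : Fin n →₀ ℕ) (c : k) :
    Phi ε (MvPolynomial.monomial m c) = c * ε ⇑m := by
  rw [← MvPolynomial.single_eq_monomial]
  exact Finsupp.liftAddHom_apply_single _ _ _

lemma Phi_mono (u : Fin n → ℕ) : Phi ε (mono k u) = ε u := by
  rw [mono, Phi_monomial, coe_symm, one_mul]

lemma Phi_mul_binom (p q : Fin n → ℕ)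
    (hinv : ∀ m : Fin n → ℕ, ε (m + p) = ε (m + q)) (r : MvPolynomial (Fin n) k) :
    Phi ε (r * binom k p q) = 0 := by
  induction r using MvPolynomial.induction_on' with
  | monomial m c =>
    rw [binom, mul_sub, map_sub]
    have h1 : MvPolynomial.monomial m c * mono k p
        = MvPolynomial.monomial (m + Finsupp.equivFunOnFinite.symm p) c := by
      rw [mono, MvPolynomial.monomial_mul, mul_one]
    have h2 : MvPolynomial.monomial m c * mono k q
        = MvPolynomial.monomial (m + Finsupp.equivFunOnFinite.symm q) c := by
      rw [mono, MvPolynomial.monomial_mul, mul_one]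
    rw [h1, h2, Phi_monomial, Phi_monomial]
    have hp : ⇑(m + Finsupp.equivFunOnFinite.symm p) = ⇑m + p := by
      rw [Finsupp.coe_add, coe_symm]
    have hq : ⇑(m + Finsupp.equivFunOnFinite.symm q) = ⇑m + q := by
      rw [Finsupp.coe_add, coe_symm]
    rw [hp, hq, hinv ⇑m, sub_self]
  | add f g hf hg => rw [add_mul, map_add, hf, hg, add_zero]

lemma Phi_span_zero (G : Set (MvPolynomial (Fin n) k))
    (hG : ∀ gp ∈ G, ∀ r, Phi ε (r * gp) = 0) :
    ∀ z ∈ Ideal.span G, Phi ε z = 0 := by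
  intro z hz
  let T : Ideal (MvPolynomial (Fin n) k) :=
    { carrier := {f | ∀ r, Phi ε (r * f) = 0}
      add_mem' := fun hx hy r => by
        rw [mul_add, map_add, hx r, hy r, add_zero]
      zero_mem' := fun r => by rw [mul_zero, map_zero]
      smul_mem' := fun c f hf r => by
        rw [smul_eq_mul, ← mul_assoc]; exact hf (r * c) }
  have hle : Ideal.span G ≤ T := Ideal.span_le.mpr (fun gp hgp => hG gp hgp)
  have := hle hz 1
  rwa [one_mul] at this

end Phi


section Conn
variable {k : Type*} [Field k] {n d : ℕ}

/-- full support of a pair of exponent vectors -/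
def FullSupp {n : ℕ} (p q : Fin n → ℕ) : Prop := ∀ l, p l ≠ 0 ∨ q l ≠ 0

/-- one move by a generator binomial -/
def StepRel (k : Type*) [Field k] {n d : ℕ} (a : Fin n → Fin d → ℕ)
    (G : Finset (MvPolynomial (Fin n) k)) (w w' : Fin n → ℕ) : Prop :=
  ∃ p q m, (binom k p q ∈ G) ∧ FullSupp p q ∧ Dg a p = Dg a q ∧
    ((w = m + p ∧ w' = m + q) ∨ (w = m + q ∧ w' = m + p))

lemma stepRel_symm {a : Fin n → Fin d → ℕ} {G : Finset (MvPolynomial (Fin n) k)}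
    {w w' : Fin n → ℕ} (h : StepRel k a G w w') : StepRel k a G w' w := by
  obtain ⟨p, q, m, h1, h2, h3, h4⟩ := h
  rcases h4 with ⟨hw, hw'⟩ | ⟨hw, hw'⟩
  · exact ⟨p, q, m, h1, h2, h3, Or.inr ⟨hw', hw⟩⟩
  · exact ⟨p, q, m, h1, h2, h3, Or.inl ⟨hw', hw⟩⟩

lemma stepRel_dg {a : Fin n → Fin d → ℕ} {G : Finset (MvPolynomial (Fin n) k)}
    {w w' : Fin n → ℕ} (h : StepRel k a G w w') : Dg a w = Dg a w' := by
  obtain ⟨p, q, m, _, _, h3, h4⟩ := h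
  rcases h4 with ⟨rfl, rfl⟩ | ⟨rfl, rfl⟩ <;> rw [Dg_add, Dg_add, h3]

lemma conn {a : Fin n → Fin d → ℕ} {G : Finset (MvPolynomial (Fin n) k)}
    (hspan : Ideal.span (G : Set (MvPolynomial (Fin n) k)) = toricIdeal k a)
    (hfull : ∀ gp ∈ G, ∃ p q : Fin n → ℕ, gp = binom k p q ∧ FullSupp p q)
    {u v : Fin n → ℕ} (huv : Dg a u = Dg a v) :
    Relation.ReflTransGen (StepRel k a G) u v := by
  classical
  by_contra hc
  set ε : (Fin n → ℕ) → k := fun w =>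
    if Dg a w = Dg a u ∧ Relation.ReflTransGen (StepRel k a G) u w then 1 else 0 with hε
  have hG : ∀ gp ∈ (G : Set (MvPolynomial (Fin n) k)), ∀ r, Phi ε (r * gp) = 0 := by
    intro gp hgp r
    obtain ⟨p, q, rfl, hfs⟩ := hfull gp hgp
    by_cases hpq : p = q
    · subst hpq
      rw [binom, sub_self, mul_zero, map_zero]
    · have hmem : binom k p q ∈ toricIdeal k a := by
        rw [← hspan]; exact Ideal.subset_span hgp
      have hdg : Dg a p = Dg a q := (mem_binom a hmem).resolve_right hpq
      refine Phi_mul_binom ε p q (fun m => ?_) r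
      have hstep : StepRel k a G (m + p) (m + q) :=
        ⟨p, q, m, hgp, hfs, hdg, Or.inl ⟨rfl, rfl⟩⟩
      have hdg2 : Dg a (m + p) = Dg a (m + q) := stepRel_dg hstep
      have hiff : Relation.ReflTransGen (StepRel k a G) u (m + p) ↔
          Relation.ReflTransGen (StepRel k a G) u (m + q) :=
        ⟨fun h => h.tail hstep, fun h => h.tail (stepRel_symm hstep)⟩
      have hcond : (Dg a (m + p) = Dg a u ∧ Relation.ReflTransGen (StepRel k a G) u (m + p))
          ↔ (Dg a (m + q) = Dg a u ∧ Relation.ReflTransGen (StepRel k a G) u (m + q)) := by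
        rw [hdg2, hiff]
      rw [hε]
      simp only []
      exact if_congr hcond rfl rfl
  have hz : binom k u v ∈ Ideal.span (G : Set (MvPolynomial (Fin n) k)) := by
    rw [hspan]; exact binom_mem a huv
  have h0 : Phi ε (binom k u v) = 0 := Phi_span_zero ε _ hG _ hz
  rw [binom, map_sub, Phi_mono, Phi_mono] at h0
  have hu : ε u = 1 := by rw [hε]; simp [Relation.ReflTransGen.refl]
  have hv : ε v = 0 := by rw [hε]; simp [hc]
  rw [hu, hv, sub_zero] at h0
  exact one_ne_zero h0

end Conn


section Semigroup
variable {n d : ℕ} (a : Fin n → Fin d → ℕ)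

def sing {n : ℕ} (i : Fin n) : Fin n → ℕ := fun l => if l = i then 1 else 0

lemma split_vec {n : ℕ} {w : Fin n → ℕ} {i : Fin n} (h : w i ≠ 0) :
    ∃ w', w = w' + sing i ∧ ∀ l, l ≠ i → w' l = w l := by
  refine ⟨fun l => if l = i then w i - 1 else w l, ?_, ?_⟩
  · funext l
    by_cases hl : l = i
    · subst hl; simp [sing]; omega
    · simp [sing, hl]
  · intro l hl; simp [hl]

lemma Dg_sing (i : Fin n) : Dg a (sing i) = a i := Dg_single a i

lemma extract1 {f : Fin d → ℕ} {i : Fin n} {w : Fin n → ℕ}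
    (hw : Dg a w = f + a i) (hi : w i ≠ 0) : ∃ w', f = Dg a w' := by
  obtain ⟨w', hsplit, -⟩ := split_vec hi
  rw [hsplit, Dg_add, Dg_sing] at hw
  exact ⟨w', (add_right_cancel hw).symm⟩

lemma extract2 {f : Fin d → ℕ} {i j : Fin n} {w : Fin n → ℕ} (hij : i ≠ j)
    (hw : Dg a w = f + a i + a j) (hi : w i ≠ 0) (hj : w j ≠ 0) :
    ∃ w', f = Dg a w' := by
  obtain ⟨w1, hsplit1, hother1⟩ := split_vec hi
  have hj1 : w1 j ≠ 0 := by rw [hother1 j (Ne.symm hij)]; exact hj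
  obtain ⟨w2, hsplit2, -⟩ := split_vec hj1
  rw [hsplit1, hsplit2, Dg_add, Dg_add, Dg_sing, Dg_sing] at hw
  have hw' : Dg a w2 + (a i + a j) = f + (a i + a j) := by
    rw [show Dg a w2 + (a i + a j) = Dg a w2 + a j + a i by abel, hw]; abel
  exact ⟨w2, (add_right_cancel hw').symm⟩

lemma mem_S_iff {S : AddSubmonoid (Fin d → ℕ)}
    (hSa : AddSubmonoid.closure (Set.range a) = S) (x : Fin d → ℕ) :
    x ∈ S ↔ ∃ w, x = Dg a w := by
  constructor
  · intro hx
    have hx' : x ∈ AddSubmonoid.closure (Set.range a) := by rw [hSa]; exact hx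
    refine AddSubmonoid.closure_induction ?_ ?_ ?_ hx'
    · rintro y ⟨i, rfl⟩
      exact ⟨sing i, (Dg_sing a i).symm⟩
    · exact ⟨0, (Dg_zero a).symm⟩
    · rintro y z - - ⟨wy, rfl⟩ ⟨wz, rfl⟩
      exact ⟨wy + wz, (Dg_add a wy wz).symm⟩
  · rintro ⟨w, rfl⟩
    have haS : ∀ l, a l ∈ S := fun l => by
      rw [← hSa]; exact AddSubmonoid.subset_closure ⟨l, rfl⟩
    exact AddSubmonoid.sum_mem S fun l _ => AddSubmonoid.nsmul_mem S (haS l) (w l)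

end Semigroup


section Counting

lemma counting {n : ℕ} (hn : 4 ≤ n) (E : Fin n → Fin n → Prop)
    (hA : ∀ i j l : Fin n, i ≠ j → i ≠ l → j ≠ l → (E i l ∨ E j l))
    (hB : ∀ i j l : Fin n, i ≠ j → i ≠ l → j ≠ l → (¬ E l i ∨ ¬ E l j)) : False := by
  classical
  set RowsTo : Fin n → Finset (Fin n) :=
    fun l => Finset.univ.filter (fun i => i ≠ l ∧ E i l) with hR
  have htwo : ∀ l, 2 ≤ (RowsTo l).card := by
    intro l
    -- find three distinct elements ≠ l
    have hcard : 3 ≤ (Finset.univ.erase l).card := by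
      rw [Finset.card_erase_of_mem (Finset.mem_univ l), Finset.card_univ, Fintype.card_fin]
      omega
    obtain ⟨i, hi⟩ := Finset.card_pos.mp (by omega : 0 < (Finset.univ.erase l).card)
    have hcard2 : 0 < ((Finset.univ.erase l).erase i).card := by
      rw [Finset.card_erase_of_mem hi]; omega
    obtain ⟨j, hj⟩ := Finset.card_pos.mp hcard2
    have hcard3 : 0 < (((Finset.univ.erase l).erase i).erase j).card := by
      rw [Finset.card_erase_of_mem hj, Finset.card_erase_of_mem hi]; omega
    obtain ⟨m, hm⟩ := Finset.card_pos.mp hcard3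
    have hil : i ≠ l := Finset.ne_of_mem_erase hi
    have hjl : j ≠ l := Finset.ne_of_mem_erase (Finset.mem_of_mem_erase hj)
    have hji : j ≠ i := Finset.ne_of_mem_erase hj
    have hmj : m ≠ j := Finset.ne_of_mem_erase hm
    have hmi : m ≠ i := Finset.ne_of_mem_erase (Finset.mem_of_mem_erase hm)
    have hml : m ≠ l := Finset.ne_of_mem_erase
      (Finset.mem_of_mem_erase (Finset.mem_of_mem_erase hm))
    have hmem : ∀ x : Fin n, x ≠ l → E x l → x ∈ RowsTo l := by
      intro x hx hEx
      rw [hR]; simp only [Finset.mem_filter, Finset.mem_univ, true_and]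
      exact ⟨hx, hEx⟩
    have hpair : ∃ x y : Fin n, x ≠ y ∧ x ∈ RowsTo l ∧ y ∈ RowsTo l := by
      by_cases hEi : E i l
      · rcases hA j m l (fun h => hmj h.symm) hjl hml with hEj | hEm
        · exact ⟨i, j, fun h => hji h.symm, hmem i hil hEi, hmem j hjl hEj⟩
        · exact ⟨i, m, fun h => hmi h.symm, hmem i hil hEi, hmem m hml hEm⟩
      · have hEj : E j l := (hA i j l (fun h => hji h.symm) hil hjl).resolve_left hEi
        have hEm : E m l := (hA i m l (fun h => hmi h.symm) hil hml).resolve_left hEi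
        exact ⟨j, m, fun h => hmj h.symm, hmem j hjl hEj, hmem m hml hEm⟩
    obtain ⟨x, y, hxy, hx, hy⟩ := hpair
    exact Finset.one_lt_card.mpr ⟨x, hx, y, hy, hxy⟩
  have hdisj : ∀ l l' : Fin n, l ≠ l' → Disjoint (RowsTo l) (RowsTo l') := by
    intro l l' hll'
    rw [Finset.disjoint_left]
    intro r hr hr'
    rw [hR] at hr hr'
    simp only [Finset.mem_filter, Finset.mem_univ, true_and] at hr hr'
    rcases hB l l' r hll' (Ne.symm hr.1) (Ne.symm hr'.1) with hc | hc
    · exact hc hr.2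
    · exact hc hr'.2
  have hsub : (Finset.univ.biUnion RowsTo) ⊆ Finset.univ := Finset.subset_univ _
  have hcard_le : (Finset.univ.biUnion RowsTo).card ≤ n := by
    calc (Finset.univ.biUnion RowsTo).card ≤ Finset.univ.card := Finset.card_le_card hsub
    _ = n := by rw [Finset.card_univ, Fintype.card_fin]
  have hcard_eq : (Finset.univ.biUnion RowsTo).card = ∑ l, (RowsTo l).card :=
    Finset.card_biUnion (fun x _ y _ hxy => hdisj x y hxy)
  have hge : 2 * n ≤ ∑ l : Fin n, (RowsTo l).card := by
    calc 2 * n = ∑ _l : Fin n, 2 := by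
          rw [Finset.sum_const, Finset.card_univ, Fintype.card_fin, smul_eq_mul, mul_comm]
    _ ≤ ∑ l, (RowsTo l).card := Finset.sum_le_sum (fun l _ => htwo l)
  omega

end Counting

end AuxNG

/-- For `n ≥ 4`, the toric ideal of a `≺`-almost symmetric affine
semigroup is not generic. -/


theorem almostSym_not_generic (k : Type*) [Field k] {n d : ℕ} (hn : 4 ≤ n)
    (τ : TermOrder d)
    (S : AddSubmonoid (Fin d → ℕ)) (a : Fin n → Fin d → ℕ) (hmin : MinGen a S)
    (hAS : AlmostSym τ S) :
    ¬ IsGeneric k a := by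
  classical
  rintro ⟨G, hGfull, hGspan, -⟩
  obtain ⟨F, hFrob, hne, hpart⟩ := hAS
  obtain ⟨g, hg⟩ := hne
  obtain ⟨h, hh, hghF⟩ := hpart g hg
  have hSa : AddSubmonoid.closure (Set.range a) = S := hmin.2.1
  have hFS : F ∉ S := hFrob.1.2
  have hgPF : g ∈ PF S := hg.1
  have hhPF : h ∈ PF S := hh.1
  have hgS : g ∉ S := hgPF.1.2
  have hhS : h ∉ S := hhPF.1.2
  have ha_ne : ∀ l, a l ≠ 0 := by
    intro l hl
    have h1 := hmin.2.2 (a l) ⟨l, rfl⟩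
    exact h1 (by rw [hl]; exact (AddSubmonoid.closure _).zero_mem)
  have haS : ∀ l, a l ∈ S := fun l => by
    rw [← hSa]; exact AddSubmonoid.subset_closure ⟨l, rfl⟩
  have hmem : ∀ x : Fin d → ℕ, x ∈ S ↔ ∃ w, x = AuxNG.Dg a w := AuxNG.mem_S_iff a hSa
  have hfact : ∀ f ∈ PF S, ∀ i, ∃ α, f + a i = AuxNG.Dg a α := by
    intro f hf i
    exact (hmem _).mp (hf.2 (a i) (haS i) (ha_ne i))
  have havoid : ∀ f : Fin d → ℕ, f ∉ S → ∀ (i) (w : Fin n → ℕ),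
      f + a i = AuxNG.Dg a w → w i = 0 := by
    intro f hf i w hw
    by_contra hwi
    obtain ⟨w', hw'⟩ := AuxNG.extract1 a hw.symm hwi
    exact hf ((hmem f).mpr ⟨w', hw'⟩)
  have hfull' : ∀ gp ∈ G, ∃ p q : Fin n → ℕ, gp = binom k p q ∧ AuxNG.FullSupp p q := by
    intro gp hgp
    obtain ⟨p, q, h1, h2⟩ := hGfull gp hgp
    exact ⟨p, q, h1, h2⟩
  have hkey : ∀ i j : Fin n, i ≠ j → ∀ α β : Fin n → ℕ,
      g + a i = AuxNG.Dg a α → h + a j = AuxNG.Dg a β → α j ≠ 0 → β i ≠ 0 → False := by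
    intro i j hij α β hα hβ hαj hβi
    have hsum : AuxNG.Dg a (α + β) = F + a i + a j := by
      rw [AuxNG.Dg_add, ← hα, ← hβ, ← hghF]; abel
    have hi : (α + β) i ≠ 0 := by simp only [Pi.add_apply]; omega
    have hj : (α + β) j ≠ 0 := by simp only [Pi.add_apply]; omega
    obtain ⟨w', hw'⟩ := AuxNG.extract2 a hij hsum hi hj
    exact hFS ((hmem F).mpr ⟨w', hw'⟩)
  have hSigma : ∀ f ∈ PF S, ∀ i j : Fin n, i ≠ j → ∀ α, f + a i = AuxNG.Dg a α →
      ∃ β, f + a j = AuxNG.Dg a β ∧ ∀ l, l ≠ i → l ≠ j → (α l ≠ 0 ∨ β l ≠ 0) := by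
    intro f hf i j hij α hα
    have hfS : f ∉ S := hf.1.2
    obtain ⟨φ, hφ⟩ := hfact f hf j
    set u := α + AuxNG.sing j with hu
    set v := φ + AuxNG.sing i with hv
    have hDu : AuxNG.Dg a u = f + a i + a j := by
      rw [hu, AuxNG.Dg_add, AuxNG.Dg_sing, ← hα]
    have hDv : AuxNG.Dg a v = f + a i + a j := by
      rw [hv, AuxNG.Dg_add, AuxNG.Dg_sing, ← hφ]; abel
    have hαi : α i = 0 := havoid f hfS i α hα
    have hui : u i = 0 := by
      rw [hu]; simp [Pi.add_apply, AuxNG.sing, hαi, hij]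
    have hvi : v i ≠ 0 := by rw [hv]; simp [Pi.add_apply, AuxNG.sing]
    have hconn := AuxNG.conn hGspan hfull' (hDu.trans hDv.symm)
    rcases Relation.ReflTransGen.cases_head hconn with heq | ⟨w, hstep, -⟩
    · rw [heq] at hui; exact absurd hui hvi
    obtain ⟨p, q, m, -, hfs, hdgpq, hor⟩ := hstep
    have hcase : ∃ P Q : Fin n → ℕ, u = m + P ∧ w = m + Q ∧ AuxNG.FullSupp P Q ∧
        AuxNG.Dg a P = AuxNG.Dg a Q := by
      rcases hor with ⟨h1, h2⟩ | ⟨h1, h2⟩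
      · exact ⟨p, q, h1, h2, hfs, hdgpq⟩
      · exact ⟨q, p, h1, h2, fun l => (hfs l).symm, hdgpq.symm⟩
    obtain ⟨P, Q, huP, hwQ, hPQ, hdPQ⟩ := hcase
    have hPi : P i = 0 := by
      have h0 := congrFun huP i
      rw [hui, Pi.add_apply] at h0
      omega
    have hQi : Q i ≠ 0 := (hPQ i).resolve_left (fun hc => hc hPi)
    have hwi : w i ≠ 0 := by
      have h0 := congrFun hwQ i
      rw [Pi.add_apply] at h0
      omega
    have hDw : AuxNG.Dg a w = f + a i + a j := by
      rw [hwQ, AuxNG.Dg_add, ← hdPQ, ← AuxNG.Dg_add, ← huP, hDu]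
    have hwj : w j = 0 := by
      by_contra hwj
      obtain ⟨w', hw'⟩ := AuxNG.extract2 a hij hDw hwi hwj
      exact hfS ((hmem f).mpr ⟨w', hw'⟩)
    obtain ⟨β, hβsplit, hβother⟩ := AuxNG.split_vec hwi
    have hβfact : f + a j = AuxNG.Dg a β := by
      rw [hβsplit, AuxNG.Dg_add, AuxNG.Dg_sing] at hDw
      have h1 : AuxNG.Dg a β + a i = (f + a j) + a i := by rw [hDw]; abel
      exact (add_right_cancel h1).symm
    refine ⟨β, hβfact, ?_⟩
    intro l hli hlj
    rcases hPQ l with hPl | hQl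
    · left
      have h0 := congrFun huP l
      have hul : u l = α l := by
        rw [hu]; simp [Pi.add_apply, AuxNG.sing, hlj]
      rw [hul, Pi.add_apply] at h0
      omega
    · right
      have h0 := congrFun hwQ l
      have hwl : w l = β l := by
        rw [hβsplit]; simp [Pi.add_apply, AuxNG.sing, hli]
      rw [hwl, Pi.add_apply] at h0
      omega
  by_cases hZ : ∃ i j : Fin n, i ≠ j ∧ (∃ α, g + a i = AuxNG.Dg a α ∧ α j = 0) ∧
      (∃ β, h + a j = AuxNG.Dg a β ∧ β i = 0)
  · obtain ⟨i, j, hij, ⟨α, hα, hαj⟩, ⟨β, hβ, hβi⟩⟩ := hZ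
    set u := α + β with hu
    have hDu : AuxNG.Dg a u = F + a i + a j := by
      rw [hu, AuxNG.Dg_add, ← hα, ← hβ, ← hghF]; abel
    have hαi : α i = 0 := havoid g hgS i α hα
    have hβj : β j = 0 := havoid h hhS j β hβ
    have hui : u i = 0 := by rw [hu]; simp [Pi.add_apply, hαi, hβi]
    have huj : u j = 0 := by rw [hu]; simp [Pi.add_apply, hαj, hβj]
    have hFaj : F + a j ∈ S := by
      have hhaj : h + a j ∈ S := hhPF.2 (a j) (haS j) (ha_ne j)
      have hne' : h + a j ≠ 0 := by
        intro hc
        apply ha_ne j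
        funext x
        have h0 := congrFun hc x
        simp only [Pi.add_apply, Pi.zero_apply] at h0 ⊢
        omega
      have h1 := hgPF.2 (h + a j) hhaj hne'
      have heq : g + (h + a j) = F + a j := by rw [← hghF]; abel
      rwa [heq] at h1
    obtain ⟨φ, hφ⟩ := (hmem _).mp hFaj
    set v := φ + AuxNG.sing i with hv
    have hDv : AuxNG.Dg a v = F + a i + a j := by
      rw [hv, AuxNG.Dg_add, AuxNG.Dg_sing, ← hφ]; abel
    have hvi : v i ≠ 0 := by rw [hv]; simp [Pi.add_apply, AuxNG.sing]
    have hconn := AuxNG.conn hGspan hfull' (hDu.trans hDv.symm)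
    rcases Relation.ReflTransGen.cases_head hconn with heq | ⟨w, hstep, -⟩
    · rw [heq] at hui; exact absurd hui hvi
    obtain ⟨p, q, m, -, hfs, hdgpq, hor⟩ := hstep
    have hcase : ∃ P Q : Fin n → ℕ, u = m + P ∧ w = m + Q ∧ AuxNG.FullSupp P Q ∧
        AuxNG.Dg a P = AuxNG.Dg a Q := by
      rcases hor with ⟨h1, h2⟩ | ⟨h1, h2⟩
      · exact ⟨p, q, h1, h2, hfs, hdgpq⟩
      · exact ⟨q, p, h1, h2, fun l => (hfs l).symm, hdgpq.symm⟩
    obtain ⟨P, Q, huP, hwQ, hPQ, hdPQ⟩ := hcase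
    have hPi : P i = 0 := by
      have h0 := congrFun huP i
      rw [hui, Pi.add_apply] at h0
      omega
    have hPj : P j = 0 := by
      have h0 := congrFun huP j
      rw [huj, Pi.add_apply] at h0
      omega
    have hQi : Q i ≠ 0 := (hPQ i).resolve_left (fun hc => hc hPi)
    have hQj : Q j ≠ 0 := (hPQ j).resolve_left (fun hc => hc hPj)
    have hwi : w i ≠ 0 := by
      have h0 := congrFun hwQ i
      rw [Pi.add_apply] at h0
      omega
    have hwj : w j ≠ 0 := by
      have h0 := congrFun hwQ j
      rw [Pi.add_apply] at h0
      omega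
    have hDw : AuxNG.Dg a w = F + a i + a j := by
      rw [hwQ, AuxNG.Dg_add, ← hdPQ, ← AuxNG.Dg_add, ← huP, hDu]
    obtain ⟨w', hw'⟩ := AuxNG.extract2 a hij hDw hwi hwj
    exact hFS ((hmem F).mpr ⟨w', hw'⟩)
  · push_neg at hZ
    set E : Fin n → Fin n → Prop :=
      fun i j => ∀ α, g + a i = AuxNG.Dg a α → α j ≠ 0 with hE
    have hNoZ : ∀ i j : Fin n, i ≠ j →
        E i j ∨ (∀ β, h + a j = AuxNG.Dg a β → β i ≠ 0) := by
      intro i j hij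
      by_cases hEij : E i j
      · exact Or.inl hEij
      · right
        have hEij2 : ∃ α, g + a i = AuxNG.Dg a α ∧ α j = 0 := by
          by_contra hc
          push_neg at hc
          exact hEij (fun α hα => hc α hα)
        obtain ⟨α, hα, hαj⟩ := hEij2
        intro β hβ hβi
        exact hZ i j hij ⟨α, hα, hαj⟩ β hβ hβi
    have hEneg : ∀ i j : Fin n, i ≠ j → ¬ E i j →
        ∀ α, g + a i = AuxNG.Dg a α → α j = 0 := by
      intro i j hij hEij α hα
      have hR := (hNoZ i j hij).resolve_left hEij
      by_contra hαj
      obtain ⟨β, hβ⟩ := hfact h hhPF j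
      exact hkey i j hij α β hα hβ hαj (hR β hβ)
    have hHpos : ∀ i j : Fin n, i ≠ j → E i j →
        ∀ β, h + a j = AuxNG.Dg a β → β i = 0 := by
      intro i j hij hEij β hβ
      by_contra hβi
      obtain ⟨α, hα⟩ := hfact g hgPF i
      exact hkey i j hij α β hα hβ (hEij α hα) hβi
    have hA : ∀ i j l : Fin n, i ≠ j → i ≠ l → j ≠ l → (E i l ∨ E j l) := by
      intro i j l hij hil hjl
      obtain ⟨α, hα⟩ := hfact g hgPF i
      obtain ⟨β, hβ, hsupp⟩ := hSigma g hgPF i j hij α hα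
      rcases hsupp l (Ne.symm hil) (Ne.symm hjl) with hαl | hβl
      · left
        by_contra hEil
        exact hαl (hEneg i l hil hEil α hα)
      · right
        by_contra hEjl
        exact hβl (hEneg j l hjl hEjl β hβ)
    have hB : ∀ i j l : Fin n, i ≠ j → i ≠ l → j ≠ l → (¬ E l i ∨ ¬ E l j) := by
      intro i j l hij hil hjl
      obtain ⟨β, hβ⟩ := hfact h hhPF i
      obtain ⟨β', hβ', hsupp⟩ := hSigma h hhPF i j hij β hβ
      rcases hsupp l (Ne.symm hil) (Ne.symm hjl) with hβl | hβ'l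
      · left
        intro hEli
        exact hβl (hHpos l i (Ne.symm hil) hEli β hβ)
      · right
        intro hElj
        exact hβ'l (hHpos l j (Ne.symm hjl) hElj β' hβ')
    exact AuxNG.counting hn E hA hB
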